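/- For the second Ding–Helleseth sequence, the product over a ∈ P satisfies Π_{a ∈ P} S(ξ_N^a) = ((p−1)²·η₀^{(q)}·η₁^{(q)})^{(q−1)/2}. -/

import Mathlib

open Finset

/-- `ξ_N = exp(2πi/N)`, a primitive `N`-th root of unity. -/
noncomputable def DHxi (N : ℕ) : ℂ := Complex.exp (2 * Real.pi * Complex.I / N)

/-- Gauss period: `Σ_{a ∈ D} ξ_N^a`. -/
noncomputable def DHeta (N : ℕ) (D : Finset (ZMod N)) : ℂ := ∑ a ∈ D, DHxi N ^ a.val

/-- Ding–Helleseth generalized cyclotomic class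
`D₀ = {g^(2t) x^i : 0 ≤ t ≤ e/2 - 1, i ∈ {0,1}}` in `ZMod (p*q)`, where `e = (p-1)(q-1)/2`. -/
def DHD0 (p q g x : ℕ) : Finset (ZMod (p * q)) :=
  (Finset.range ((p - 1) * (q - 1) / 4) ×ˢ Finset.range 2).image
    (fun ti => (g : ZMod (p * q)) ^ (2 * ti.1) * (x : ZMod (p * q)) ^ ti.2)

/-- `D₁ = g · D₀`. -/
def DHD1 (p q g x : ℕ) : Finset (ZMod (p * q)) :=
  (DHD0 p q g x).image (fun d => (g : ZMod (p * q)) * d)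

/-- `P = {p, 2p, …, (q-1)p}` as a subset of `ZMod (p*q)`. -/
def DHP (p q : ℕ) : Finset (ZMod (p * q)) :=
  (Finset.Icc 1 (q - 1)).image (fun k => ((k * p : ℕ) : ZMod (p * q)))

/-- `Q = {q, 2q, …, (p-1)q}` as a subset of `ZMod (p*q)`. -/
def DHQ (p q : ℕ) : Finset (ZMod (p * q)) :=
  (Finset.Icc 1 (p - 1)).image (fun k => ((k * q : ℕ) : ZMod (p * q)))

/-- First Ding–Helleseth sequence: `s_i = 1` iff `i mod N ∈ D₁ ∪ P`. -/
def DHs1 (p q g x : ℕ) (i : ℕ) : ℕ :=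
  if (i : ZMod (p * q)) ∈ DHD1 p q g x ∪ DHP p q then 1 else 0

/-- Second Ding–Helleseth sequence: `s_i = 1` iff `i mod N ∈ D₁ ∪ Q`. -/
def DHs2 (p q g x : ℕ) (i : ℕ) : ℕ :=
  if (i : ZMod (p * q)) ∈ DHD1 p q g x ∪ DHQ p q then 1 else 0

/-- Circulant matrix of the first sequence: `a_{i,j} = s_{(i-j) mod N}`. -/
noncomputable def DHA1 (p q g x : ℕ) : Matrix (Fin (p * q)) (Fin (p * q)) ℂ :=
  fun i j => (DHs1 p q g x ((((i : ℕ) : ZMod (p * q)) - ((j : ℕ) : ZMod (p * q))).val) : ℂ)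

/-- Circulant matrix of the second sequence: `a_{i,j} = s_{(i-j) mod N}`. -/
noncomputable def DHA2 (p q g x : ℕ) : Matrix (Fin (p * q)) (Fin (p * q)) ℂ :=
  fun i j => (DHs2 p q g x ((((i : ℕ) : ZMod (p * q)) - ((j : ℕ) : ZMod (p * q))).val) : ℂ)

/-- `S(z) = Σ_{i=0}^{N-1} s_i z^i` for the first sequence. -/
noncomputable def DHSval1 (p q g x : ℕ) (z : ℂ) : ℂ :=
  ∑ i ∈ Finset.range (p * q), (DHs1 p q g x i : ℂ) * z ^ i

/-- `S(z) = Σ_{i=0}^{N-1} s_i z^i` for the second sequence. -/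
noncomputable def DHSval2 (p q g x : ℕ) (z : ℂ) : ℂ :=
  ∑ i ∈ Finset.range (p * q), (DHs2 p q g x i : ℂ) * z ^ i

/-- `S(2) = Σ_{i=0}^{N-1} s_i 2^i` for the first sequence, as a natural number. -/
def DHS2num1 (p q g x : ℕ) : ℕ := ∑ i ∈ Finset.range (p * q), DHs1 p q g x i * 2 ^ i

/-- `S(2) = Σ_{i=0}^{N-1} s_i 2^i` for the second sequence, as a natural number. -/
def DHS2num2 (p q g x : ℕ) : ℕ := ∑ i ∈ Finset.range (p * q), DHs2 p q g x i * 2 ^ i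

/-- Nonzero quadratic residues modulo `q`. -/
def DHQR (q : ℕ) [NeZero q] : Finset (ZMod q) :=
  Finset.univ.filter (fun a => a ≠ 0 ∧ ∃ b : ZMod q, b * b = a)

/-- Quadratic nonresidues modulo `q`. -/
def DHQNR (q : ℕ) [NeZero q] : Finset (ZMod q) :=
  Finset.univ.filter (fun a => a ≠ 0 ∧ ¬∃ b : ZMod q, b * b = a)

/-!
For `a = k p ∈ P` we have `ξ_N ^ a = ξ_q ^ k`, so `S(ξ_N ^ a)` only sees residues modulo `q`:
every element of `Q` contributes `1`, and reduction modulo `q` maps `D₁ = {g ^ (2t+1) x ^ i}` onto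
the quadratic nonresidues, hitting each exactly `p - 1` times. The count rests on the injectivity
of `(t, i) ↦ g ^ (2t+1) x ^ i`, which is the Chinese remainder theorem for the coprime moduli
`(p - 1) / 2` and `(q - 1) / 2`. Hence `S(ξ_q ^ k) = (p - 1) (1 + Σ_{b nonresidue} ξ_q ^ (k b))`,
and since multiplying by `k` permutes or swaps the two classes and `η₀ + η₁ = -1`, this is
`-(p - 1) η₀` or `-(p - 1) η₁` according as `k` is a residue or not; each case occurs
`(q - 1) / 2` times.
-/

lemma sum_range_mul_of_periodic {M : Type*} [AddCommMonoid M] {f : ℕ → M} {b : ℕ}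
    (hf : Function.Periodic f b) (a : ℕ) :
    ∑ t ∈ range (a * b), f t = a • ∑ t ∈ range b, f t := by
  induction a with
  | zero => simp
  | succ a ih =>
    rw [Nat.succ_mul, sum_range_add, ih, succ_nsmul]
    congr 1
    exact sum_congr rfl fun t _ => by rw [add_comm]; exact hf.nat_mul a t

lemma injOn_pow_two_mul_add_one {G : Type*} [Monoid G] (g : G) :
    Set.InjOn (fun t => g ^ (2 * t + 1)) (range (orderOf g / 2)) := by
  intro t ht t' ht' h
  simp only [coe_range, Set.mem_Iio] at ht ht'
  have hfin : IsOfFinOrder g := orderOf_pos_iff.mp (by omega)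
  have := (hfin.pow_eq_pow_iff_modEq.mp h).eq_of_lt_of_lt (by omega) (by omega)
  omega

section QuadraticChar

variable {F : Type*} [Field F] [Fintype F] [DecidableEq F]

lemma sum_filter_quadraticChar_mul_left {M : Type*} [AddCommMonoid M] {u : F} (hu : u ≠ 0)
    (f : F → M) (ε : ℤ) :
    ∑ b ∈ univ.filter (quadraticChar F · = ε), f (u * b) =
      ∑ c ∈ univ.filter (quadraticChar F · = quadraticChar F u * ε), f c := by
  refine Finset.sum_equiv (Equiv.mulLeft₀ u hu) (fun b => ?_) (fun _ _ => rfl)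
  simp only [mem_filter, mem_univ, true_and, Equiv.mulLeft₀_apply, map_mul]
  exact (mul_right_inj' (quadraticChar_eq_zero_iff.not.mpr hu)).symm

lemma card_filter_quadraticChar_eq (hF : ringChar F ≠ 2) {ε : ℤ} (hε : ε = 1 ∨ ε = -1) :
    #(univ.filter (quadraticChar F · = ε)) = (Fintype.card F - 1) / 2 := by
  obtain ⟨c, hc⟩ := quadraticChar_exists_neg_one hF
  have hc0 : c ≠ 0 := fun h => by simp [h] at hc
  have hsame :
      #(univ.filter (quadraticChar F · = 1)) = #(univ.filter (quadraticChar F · = -1)) := by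
    have := sum_filter_quadraticChar_mul_left hc0 (fun _ => 1) 1
    rwa [hc, mul_one, sum_const, sum_const, smul_eq_mul, smul_eq_mul, mul_one, mul_one] at this
  have hsplit : univ.erase (0 : F) =
      univ.filter (quadraticChar F · = 1) ∪ univ.filter (quadraticChar F · = -1) := by
    ext a
    simp only [mem_erase, mem_univ, and_true, mem_union, mem_filter, true_and]
    exact ⟨quadraticChar_dichotomy, fun h h0 => by rcases h with h | h <;> simp [h0] at h⟩
  have hdisj : Disjoint (univ.filter (quadraticChar F · = 1))
      (univ.filter (quadraticChar F · = -1)) :=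
    disjoint_filter.mpr fun a _ h1 h2 => by rw [h1] at h2; omega
  have hcard := congrArg card hsplit
  rw [card_union_of_disjoint hdisj, card_erase_of_mem (mem_univ _), card_univ] at hcard
  rcases hε with rfl | rfl <;> omega

lemma quadraticChar_eq_neg_one_of_orderOf_eq (hF : ringChar F ≠ 2) {g : F}
    (hg : orderOf g = Fintype.card F - 1) : quadraticChar F g = -1 := by
  have hodd := FiniteField.odd_card_of_char_ne_two hF
  have hcard := Fintype.one_lt_card (α := F)
  have hg0 : g ≠ 0 := by
    rintro rfl
    rw [orderOf_zero] at hg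
    omega
  rw [quadraticChar_neg_one_iff_not_isSquare, FiniteField.isSquare_iff hF hg0]
  intro h
  have := Nat.le_of_dvd (by omega) (hg ▸ orderOf_dvd_of_pow_eq_one h)
  omega

lemma image_odd_pow_eq_filter_quadraticChar (hF : ringChar F ≠ 2) {g : F}
    (hg : orderOf g = Fintype.card F - 1) :
    (range ((Fintype.card F - 1) / 2)).image (fun t => g ^ (2 * t + 1)) =
      univ.filter (quadraticChar F · = -1) := by
  refine eq_of_subset_of_card_le (fun a ha => ?_) ?_
  · obtain ⟨t, -, rfl⟩ := mem_image.mp ha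
    rw [mem_filter, map_pow, quadraticChar_eq_neg_one_of_orderOf_eq hF hg]
    exact ⟨mem_univ _, (odd_two_mul_add_one t).neg_one_pow⟩
  · rw [card_filter_quadraticChar_eq hF (Or.inr rfl),
      card_image_of_injOn (hg ▸ injOn_pow_two_mul_add_one g), card_range]

end QuadraticChar

section RootsOfUnity

lemma pow_val_natCast_of_pow_eq_one {M : Type*} [Monoid M] {z : M} {n : ℕ} (hz : z ^ n = 1)
    (m : ℕ) : z ^ (m : ZMod n).val = z ^ m := by
  rw [ZMod.val_natCast, ← pow_eq_pow_mod m hz]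

lemma DHxi_pow_self (n : ℕ) : DHxi n ^ n = 1 := by
  rcases eq_or_ne n 0 with rfl | hn
  · exact pow_zero _
  · exact (Complex.isPrimitiveRoot_exp n hn).pow_eq_one

lemma DHxi_mul_pow_left {p : ℕ} (hp : p ≠ 0) (q : ℕ) : DHxi (p * q) ^ p = DHxi q := by
  rw [DHxi, DHxi, ← Complex.exp_nat_mul, Nat.cast_mul, mul_div_assoc',
    mul_div_mul_left _ _ (Nat.cast_ne_zero.mpr hp : (p : ℂ) ≠ 0)]

end RootsOfUnity

section ZModSums

lemma sum_range_ite_natCast_mem {M : Type*} [AddCommMonoid M] {N : ℕ} [NeZero N]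
    (E : Finset (ZMod N)) (f : ℕ → M) :
    ∑ i ∈ range N, (if (i : ZMod N) ∈ E then f i else 0) = ∑ d ∈ E, f d.val := by
  rw [← sum_filter]
  refine sum_nbij' (fun i => (i : ZMod N)) ZMod.val (fun i hi => (mem_filter.mp hi).2)
    (fun d hd => ?_) (fun i hi => ?_) (fun d _ => ZMod.natCast_zmod_val d) (fun i hi => ?_)
  · simpa [ZMod.natCast_zmod_val] using ⟨ZMod.val_lt d, hd⟩
  · exact ZMod.val_cast_of_lt (mem_range.mp (mem_filter.mp hi).1)
  · rw [ZMod.val_cast_of_lt (mem_range.mp (mem_filter.mp hi).1)]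

lemma prod_Icc_natCast {M : Type*} [CommMonoid M] {n : ℕ} [NeZero n] (f : ZMod n → M) :
    ∏ k ∈ Icc 1 (n - 1), f k = ∏ u ∈ univ.erase 0, f u := by
  have hval : ∀ k ∈ Icc 1 (n - 1), (k : ZMod n).val = k := fun k hk =>
    ZMod.val_cast_of_lt (by have := NeZero.pos n; simp only [mem_Icc] at hk; omega)
  refine prod_nbij' (fun k => (k : ZMod n)) ZMod.val (fun k hk => ?_) (fun u hu => ?_)
    hval (fun u _ => ZMod.natCast_zmod_val u) (fun _ _ => rfl)
  · simp only [mem_erase, mem_univ, and_true, ne_eq, ← ZMod.val_eq_zero, hval k hk]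
    simp only [mem_Icc] at hk
    omega
  · have := ZMod.val_lt u
    simp only [mem_erase, mem_univ, and_true, ne_eq, ← ZMod.val_eq_zero] at hu
    simp only [mem_Icc]
    omega

lemma injOn_natCast_mul {m N : ℕ} (hm : m ≠ 0) {s : Set ℕ} (hs : ∀ k ∈ s, k * m < N) :
    Set.InjOn (fun k => ((k * m : ℕ) : ZMod N)) s := by
  intro k hk k' hk' h
  have := congrArg ZMod.val h
  rw [ZMod.val_cast_of_lt (hs k hk), ZMod.val_cast_of_lt (hs k' hk')] at this
  exact Nat.eq_of_mul_eq_mul_right (Nat.pos_of_ne_zero hm) this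

end ZModSums

section GaussPeriods

variable {q : ℕ} [NeZero q]

lemma DHQR_union_DHQNR : DHQR q ∪ DHQNR q = univ.erase 0 := by
  ext a
  simp only [DHQR, DHQNR, mem_union, mem_filter, mem_univ, true_and, mem_erase, and_true]
  tauto

lemma disjoint_DHQR_DHQNR : Disjoint (DHQR q) (DHQNR q) :=
  disjoint_filter.mpr fun _ _ h h' => h'.2 h.2

lemma DHeta_DHQR_add_DHeta_DHQNR (hq : 1 < q) : DHeta q (DHQR q) + DHeta q (DHQNR q) = -1 := by
  have hsum : ∑ a : ZMod q, DHxi q ^ a.val = 0 := by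
    have := sum_range_ite_natCast_mem (univ : Finset (ZMod q)) (DHxi q ^ ·)
    simp only [mem_univ, if_true] at this
    rw [← this]
    exact (Complex.isPrimitiveRoot_exp q (NeZero.ne q)).geom_sum_eq_zero hq
  rw [← add_sum_erase _ _ (mem_univ 0), ← DHQR_union_DHQNR, sum_union disjoint_DHQR_DHQNR,
    ZMod.val_zero, pow_zero] at hsum
  rw [DHeta, DHeta]
  linear_combination hsum

end GaussPeriods

section QuadraticResidues

variable {q : ℕ} [Fact q.Prime]

lemma DHQR_eq_filter : DHQR q = univ.filter (quadraticChar (ZMod q) · = 1) := by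
  ext a
  rcases eq_or_ne a 0 with rfl | ha
  · simp [DHQR]
  · rw [mem_filter, quadraticChar_one_iff_isSquare ha]
    simp only [DHQR, mem_filter, IsSquare, eq_comm]
    tauto

lemma DHQNR_eq_filter : DHQNR q = univ.filter (quadraticChar (ZMod q) · = -1) := by
  ext a
  rcases eq_or_ne a 0 with rfl | ha
  · simp [DHQNR]
  · rw [mem_filter, quadraticChar_neg_one_iff_not_isSquare]
    simp only [DHQNR, mem_filter, IsSquare, eq_comm]
    tauto

lemma card_DHQR (hq : q ≠ 2) : #(DHQR q) = (q - 1) / 2 := by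
  rw [DHQR_eq_filter, card_filter_quadraticChar_eq (by rwa [ZMod.ringChar_zmod_n]) (Or.inl rfl),
    ZMod.card]

lemma card_DHQNR (hq : q ≠ 2) : #(DHQNR q) = (q - 1) / 2 := by
  rw [DHQNR_eq_filter, card_filter_quadraticChar_eq (by rwa [ZMod.ringChar_zmod_n]) (Or.inr rfl),
    ZMod.card]

lemma image_odd_pow_eq_DHQNR (hq : q ≠ 2) {g : ZMod q} (hg : orderOf g = q - 1) :
    (range ((q - 1) / 2)).image (fun t => g ^ (2 * t + 1)) = DHQNR q := by
  have hF : ringChar (ZMod q) ≠ 2 := by rwa [ZMod.ringChar_zmod_n]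
  rw [DHQNR_eq_filter, ← image_odd_pow_eq_filter_quadraticChar hF (by rwa [ZMod.card]), ZMod.card]

lemma sum_DHQNR_mul_of_mem_DHQR {M : Type*} [AddCommMonoid M] {u : ZMod q} (hu : u ∈ DHQR q)
    (f : ZMod q → M) : ∑ b ∈ DHQNR q, f (u * b) = ∑ b ∈ DHQNR q, f b := by
  have hu0 : u ≠ 0 := (mem_filter.mp hu).2.1
  rw [DHQR_eq_filter, mem_filter] at hu
  rw [DHQNR_eq_filter, sum_filter_quadraticChar_mul_left hu0, hu.2, one_mul]

lemma sum_DHQNR_mul_of_mem_DHQNR {M : Type*} [AddCommMonoid M] {u : ZMod q} (hu : u ∈ DHQNR q)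
    (f : ZMod q → M) : ∑ b ∈ DHQNR q, f (u * b) = ∑ b ∈ DHQR q, f b := by
  have hu0 : u ≠ 0 := (mem_filter.mp hu).2.1
  rw [DHQNR_eq_filter, mem_filter] at hu
  rw [DHQNR_eq_filter, sum_filter_quadraticChar_mul_left hu0, hu.2,
    neg_one_mul, neg_neg, DHQR_eq_filter]

end QuadraticResidues

section DingHelleseth

variable {p q g x : ℕ}

lemma exists_coprime_halves_of_gcd_eq_two (h : Nat.gcd (p - 1) (q - 1) = 2) :
    ∃ a b, p - 1 = 2 * a ∧ q - 1 = 2 * b ∧ a.Coprime b := by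
  obtain ⟨a, ha⟩ := h ▸ Nat.gcd_dvd_left (p - 1) (q - 1)
  obtain ⟨b, hb⟩ := h ▸ Nat.gcd_dvd_right (p - 1) (q - 1)
  refine ⟨a, b, ha, hb, ?_⟩
  rw [ha, hb, Nat.gcd_mul_left] at h
  exact Nat.eq_of_mul_eq_mul_left two_pos (h.trans (mul_one 2).symm)

lemma DHD1_eq_image : DHD1 p q g x = (range ((p - 1) * (q - 1) / 4) ×ˢ range 2).image
    (fun ti => (g : ZMod (p * q)) ^ (2 * ti.1 + 1) * (x : ZMod (p * q)) ^ ti.2) := by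
  rw [DHD1, DHD0, image_image]
  exact image_congr fun ti _ => by simp only [Function.comp_apply]; ring

lemma injOn_DHD1_param {a b : ℕ} (hgp : orderOf (g : ZMod p) = 2 * a)
    (hgq : orderOf (g : ZMod q) = 2 * b) (hab : a.Coprime b)
    (hxp : (x : ZMod p) = (g : ZMod p)) (hxq : (x : ZMod q) = 1) :
    Set.InjOn
      (fun ti : ℕ × ℕ => (g : ZMod (p * q)) ^ (2 * ti.1 + 1) * (x : ZMod (p * q)) ^ ti.2)
      ((range (a * b) ×ˢ range 2 : Finset (ℕ × ℕ)) : Set (ℕ × ℕ)) := by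
  rintro ⟨t, i⟩ hti ⟨t', i'⟩ hti' h
  simp only [coe_product, coe_range, Set.mem_prod, Set.mem_Iio] at hti hti'
  have hfinp : IsOfFinOrder (g : ZMod p) := orderOf_pos_iff.mp (by
    have := Nat.pos_of_mul_pos_right (hti.1.trans_le' (Nat.zero_le t)); omega)
  have hfinq : IsOfFinOrder (g : ZMod q) := orderOf_pos_iff.mp (by
    have := Nat.pos_of_mul_pos_left (hti.1.trans_le' (Nat.zero_le t)); omega)
  have hmodq : 2 * t + 1 ≡ 2 * t' + 1 [MOD 2 * b] := by
    rw [← hgq, ← hfinq.pow_eq_pow_iff_modEq]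
    simpa [hxq] using congrArg (ZMod.castHom (dvd_mul_left q p) (ZMod q)) h
  have hmodp : 2 * t + 1 + i ≡ 2 * t' + 1 + i' [MOD 2 * a] := by
    rw [← hgp, ← hfinp.pow_eq_pow_iff_modEq]
    simpa [hxp, pow_add] using congrArg (ZMod.castHom (dvd_mul_right p q) (ZMod p)) h
  have hi : i = i' := by
    have := hmodp.of_mul_right a
    unfold Nat.ModEq at this
    omega
  subst hi
  have htb := (hmodq.add_right_cancel' 1).mul_left_cancel' two_ne_zero
  have hta := ((hmodp.add_right_cancel' i).add_right_cancel' 1).mul_left_cancel' two_ne_zero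
  simp only [Prod.mk.injEq, and_true]
  exact ((Nat.modEq_and_modEq_iff_modEq_mul hab).mp ⟨hta, htb⟩).eq_of_lt_of_lt hti.1 hti'.1

lemma sum_DHD1 {M : Type*} [AddCommMonoid M] [Fact q.Prime]
    (hgcd : Nat.gcd (p - 1) (q - 1) = 2) (hgp : orderOf (g : ZMod p) = p - 1)
    (hgq : orderOf (g : ZMod q) = q - 1) (hxp : (x : ZMod p) = (g : ZMod p))
    (hxq : (x : ZMod q) = 1) (f : ZMod q → M) :
    ∑ d ∈ DHD1 p q g x, f (ZMod.castHom (dvd_mul_left q p) (ZMod q) d) =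
      (p - 1) • ∑ b ∈ DHQNR q, f b := by
  obtain ⟨a, b, ha, hb, hab⟩ := exists_coprime_halves_of_gcd_eq_two hgcd
  have hquarter : (p - 1) * (q - 1) / 4 = a * b := by
    rw [ha, hb, show 2 * a * (2 * b) = a * b * 4 by ring, Nat.mul_div_cancel _ four_pos]
  have hper : Function.Periodic (fun t => f ((g : ZMod q) ^ (2 * t + 1))) b := fun t => by
    dsimp only
    rw [mul_add, add_right_comm, pow_add _ (2 * t + 1), ← hb, ← hgq, pow_orderOf_eq_one,
      mul_one]
  rw [DHD1_eq_image, hquarter, sum_image (injOn_DHD1_param (ha ▸ hgp) (hb ▸ hgq) hab hxp hxq),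
    sum_product]
  simp only [map_mul, map_pow, map_natCast, hxq, one_pow, mul_one, sum_const, card_range]
  rw [← smul_sum, sum_range_mul_of_periodic hper, smul_smul,
    ← image_odd_pow_eq_DHQNR (by omega) hgq, sum_image (hgq ▸ injOn_pow_two_mul_add_one _),
    ha, hb, Nat.mul_div_cancel_left _ two_pos]

lemma castHom_of_mem_DHQ {d : ZMod (p * q)} (hd : d ∈ DHQ p q) :
    ZMod.castHom (dvd_mul_left q p) (ZMod q) d = 0 := by
  obtain ⟨k, -, rfl⟩ := mem_image.mp hd
  rw [map_natCast, Nat.cast_mul, ZMod.natCast_self, mul_zero]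

lemma card_DHQ (hp : p ≠ 0) (hq : q ≠ 0) : #(DHQ p q) = p - 1 := by
  rw [DHQ, card_image_of_injOn (injOn_natCast_mul hq fun k hk => ?_), Nat.card_Icc]
  · omega
  · have := (mem_Icc.mp hk).2
    exact (Nat.mul_lt_mul_right (Nat.pos_of_ne_zero hq)).mpr (by omega)

lemma disjoint_DHD1_DHQ [Fact q.Prime] (hgq : orderOf (g : ZMod q) = q - 1)
    (hxq : (x : ZMod q) = 1) : Disjoint (DHD1 p q g x) (DHQ p q) := by
  rw [disjoint_left]
  intro d hd hdQ
  obtain ⟨⟨t, i⟩, -, rfl⟩ := mem_image.mp (DHD1_eq_image ▸ hd)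
  have hg : IsUnit (g : ZMod q) :=
    (orderOf_pos_iff.mp (by have := (Fact.out : q.Prime).two_le; omega)).isUnit
  have := castHom_of_mem_DHQ hdQ
  rw [map_mul, map_pow, map_pow, map_natCast, map_natCast, hxq, one_pow, mul_one] at this
  exact (hg.pow _).ne_zero this

lemma DHSval2_DHxi_pow_val [Fact q.Prime] (hp : p ≠ 0) (hgcd : Nat.gcd (p - 1) (q - 1) = 2)
    (hgp : orderOf (g : ZMod p) = p - 1) (hgq : orderOf (g : ZMod q) = q - 1)
    (hxp : (x : ZMod p) = (g : ZMod p)) (hxq : (x : ZMod q) = 1) (u : ZMod q) :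
    DHSval2 p q g x (DHxi q ^ u.val) =
      ((p : ℂ) - 1) * (1 + ∑ b ∈ DHQNR q, DHxi q ^ (u * b).val) := by
  have : NeZero (p * q) := ⟨mul_ne_zero hp (NeZero.ne q)⟩
  have hpow : ∀ d : ZMod (p * q), (DHxi q ^ u.val) ^ d.val =
      DHxi q ^ (u * ZMod.castHom (dvd_mul_left q p) (ZMod q) d).val := fun d => by
    rw [← pow_mul, ← pow_val_natCast_of_pow_eq_one (DHxi_pow_self q), Nat.cast_mul,
      ZMod.natCast_zmod_val, ZMod.castHom_apply, ZMod.cast_eq_val]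
  have hQ : ∀ d ∈ DHQ p q,
      DHxi q ^ (u * ZMod.castHom (dvd_mul_left q p) (ZMod q) d).val = 1 := fun d hd => by
    rw [castHom_of_mem_DHQ hd, mul_zero, ZMod.val_zero, pow_zero]
  simp only [DHSval2, DHs2, Nat.cast_ite, Nat.cast_one, Nat.cast_zero, ite_mul, one_mul, zero_mul]
  rw [sum_range_ite_natCast_mem, sum_union (disjoint_DHD1_DHQ hgq hxq)]
  simp only [hpow]
  rw [sum_DHD1 hgcd hgp hgq hxp hxq (fun c => DHxi q ^ (u * c).val), sum_congr rfl hQ, sum_const,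
    card_DHQ hp (NeZero.ne q), nsmul_eq_mul, nsmul_eq_mul,
    Nat.cast_sub (Nat.one_le_iff_ne_zero.mpr hp)]
  push_cast
  ring

lemma DHSval2_of_mem_DHQR [Fact q.Prime] (hp : p ≠ 0) (hgcd : Nat.gcd (p - 1) (q - 1) = 2)
    (hgp : orderOf (g : ZMod p) = p - 1) (hgq : orderOf (g : ZMod q) = q - 1)
    (hxp : (x : ZMod p) = (g : ZMod p)) (hxq : (x : ZMod q) = 1) {u : ZMod q}
    (hu : u ∈ DHQR q) :
    DHSval2 p q g x (DHxi q ^ u.val) = -(((p : ℂ) - 1) * DHeta q (DHQR q)) := by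
  rw [DHSval2_DHxi_pow_val hp hgcd hgp hgq hxp hxq,
    sum_DHQNR_mul_of_mem_DHQR hu (fun c => DHxi q ^ c.val), ← DHeta]
  linear_combination ((p : ℂ) - 1) * DHeta_DHQR_add_DHeta_DHQNR (Fact.out : q.Prime).one_lt

lemma DHSval2_of_mem_DHQNR [Fact q.Prime] (hp : p ≠ 0) (hgcd : Nat.gcd (p - 1) (q - 1) = 2)
    (hgp : orderOf (g : ZMod p) = p - 1) (hgq : orderOf (g : ZMod q) = q - 1)
    (hxp : (x : ZMod p) = (g : ZMod p)) (hxq : (x : ZMod q) = 1) {u : ZMod q}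
    (hu : u ∈ DHQNR q) :
    DHSval2 p q g x (DHxi q ^ u.val) = -(((p : ℂ) - 1) * DHeta q (DHQNR q)) := by
  rw [DHSval2_DHxi_pow_val hp hgcd hgp hgq hxp hxq,
    sum_DHQNR_mul_of_mem_DHQNR hu (fun c => DHxi q ^ c.val), ← DHeta]
  linear_combination ((p : ℂ) - 1) * DHeta_DHQR_add_DHeta_DHQNR (Fact.out : q.Prime).one_lt

lemma prod_DHP {M : Type*} [CommMonoid M] [NeZero q] (hp : p ≠ 0) (f : ℂ → M) :
    ∏ a ∈ DHP p q, f (DHxi (p * q) ^ a.val) =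
      ∏ u ∈ univ.erase (0 : ZMod q), f (DHxi q ^ u.val) := by
  have hlt : ∀ k ∈ Icc 1 (q - 1), k * p < p * q := fun k hk => by
    have := (mem_Icc.mp hk).2
    rw [mul_comm p]
    exact (Nat.mul_lt_mul_right (Nat.pos_of_ne_zero hp)).mpr (by have := NeZero.pos q; omega)
  rw [DHP, prod_image (injOn_natCast_mul hp hlt), ← prod_Icc_natCast]
  refine prod_congr rfl fun k hk => ?_
  rw [ZMod.val_cast_of_lt (hlt k hk), pow_mul', DHxi_mul_pow_left hp,
    pow_val_natCast_of_pow_eq_one (DHxi_pow_self q)]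

end DingHelleseth

theorem stmt15_general (p q g x : ℕ) [NeZero q] (hp : Nat.Prime p) (hq : Nat.Prime q)
    (hgcd : Nat.gcd (p - 1) (q - 1) = 2)
    (hgp : orderOf (g : ZMod p) = p - 1) (hgq : orderOf (g : ZMod q) = q - 1)
    (hxp : (x : ZMod p) = (g : ZMod p)) (hxq : (x : ZMod q) = 1) :
    ∏ a ∈ DHP p q, DHSval2 p q g x (DHxi (p * q) ^ a.val) =
      (((p : ℂ) - 1) ^ 2 * DHeta q (DHQR q) * DHeta q (DHQNR q)) ^ ((q - 1) / 2) := by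
  have : Fact q.Prime := ⟨hq⟩
  have hq2 : q ≠ 2 := by
    rintro rfl
    norm_num at hgcd
  rw [prod_DHP hp.ne_zero, ← DHQR_union_DHQNR, prod_union disjoint_DHQR_DHQNR,
    prod_congr rfl fun u hu => DHSval2_of_mem_DHQR hp.ne_zero hgcd hgp hgq hxp hxq hu,
    prod_congr rfl fun u hu => DHSval2_of_mem_DHQNR hp.ne_zero hgcd hgp hgq hxp hxq hu,
    prod_const, prod_const, card_DHQR hq2, card_DHQNR hq2, ← mul_pow]
  ring

theorem stmt15 (p q g x : ℕ) [NeZero q] (hp : Nat.Prime p) (hq : Nat.Prime q)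
    (hpo : Odd p) (hqo : Odd q) (hpq : p < q)
    (hgcd : Nat.gcd (p - 1) (q - 1) = 2)
    (hgp : orderOf (g : ZMod p) = p - 1) (hgq : orderOf (g : ZMod q) = q - 1)
    (hxp : (x : ZMod p) = (g : ZMod p)) (hxq : (x : ZMod q) = 1) :
    ∏ a ∈ DHP p q, DHSval2 p q g x (DHxi (p * q) ^ a.val) =
      (((p : ℂ) - 1) ^ 2 * DHeta q (DHQR q) * DHeta q (DHQNR q)) ^ ((q - 1) / 2) :=
  stmt15_general p q g x hp hq hgcd hgp hgq hxp hxq
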